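/- arXiv:math/0501077 — 3 statements merged into one kernel-verified Lean document; each statement's English description precedes it below -/
import Mathlib

section
/- Let X be a compact metric space, r : X → X a continuous, surjective, finite-to-one map, and W : X → [0,∞) a measurable function with R_W 1 = 1. If h is a bounded measurable function with R_W h = h, then for every x ∈ X the limit V((z_n)_{n≥1}) := lim_{n→∞} h(z_n) exists for P_x-almost every path (z_n)_{n≥1} starting at x, the function V so defined is a cocycle, and h(x) = ∫_{Ω_x} V dP_x for every x ∈ X. -/
open MeasureTheory Filter Topology

/-- A path starting at `x`: a sequence `z 0, z 1, z 2, …` (representing `z_1, z_2, …`)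
with `r (z 0) = x` and `r (z (n+1)) = z n`. -/
def IsPathFrom {X : Type*} (r : X → X) (x : X) (z : ℕ → X) : Prop :=
  r (z 0) = x ∧ ∀ n, r (z (n + 1)) = z n

/-- The cylinder of paths starting at `x` whose first `n` entries agree with `z`. -/
def pathCylinder {X : Type*} (r : X → X) (x : X) (z : ℕ → X) (n : ℕ) : Set (ℕ → X) :=
  {w | IsPathFrom r x w ∧ ∀ i < n, w i = z i}

/-- The Ruelle transfer operator `R_W f (x) = ∑_{y ∈ r⁻¹(x)} W(y) f(y)`. -/
noncomputable def RuelleOp {X : Type*} (r : X → X) (W : X → ℝ) (f : X → ℝ) (x : X) : ℝ :=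
  ∑ᶠ y ∈ r ⁻¹' {x}, W y * f y

/-!
Under `P_x` the process `n ↦ h (z n)` is a bounded martingale for the filtration of the first
coordinates. Indeed, the paths split into finitely many cylinders of depth `m` (since
`r^[i+1] (z i) = x`), and on such a cylinder `C` the entry `z m` runs through the fibre
`r⁻¹ (r (z m))` with `P (C ∩ {z m = y}) = P C * W y`; hence the conditional expectation of
`k (z m)` given the first `m` entries is `R_W k (r (z m))`, which for `k = h` harmonic is
`h (z (m - 1))` (or `h x` when `m = 0`). The martingale convergence theorem gives `h (z n) → V z`
a.e. with `V = liminf h (z n)`, which is shift invariant, and dominated convergence turns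
`∫ h (z n) dP_x = h x` into `h x = ∫ V dP_x`.
-/

section Paths

variable {X : Type*} {r : X → X} {x : X} {z w : ℕ → X} {m : ℕ}

theorem IsPathFrom.iterate_succ_apply (hz : IsPathFrom r x z) (i : ℕ) : r^[i + 1] (z i) = x := by
  induction i with
  | zero => exact hz.1
  | succ i ih => rw [Function.iterate_succ_apply, hz.2 i, ih]

theorem IsPathFrom.apply_eq_of_agree (hz : IsPathFrom r x z) (hw : IsPathFrom r x w)
    (hwz : ∀ i < m, w i = z i) : r (w m) = r (z m) := by
  cases m with
  | zero => rw [hw.1, hz.1]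
  | succ n => rw [hw.2, hz.2, hwz n n.lt_succ_self]

theorem exists_isPathFrom (hr : Function.Surjective r) (x : X) : ∃ z, IsPathFrom r x z := by
  refine ⟨fun i => (Function.surjInv hr)^[i + 1] x, Function.surjInv_eq hr x, fun n => ?_⟩
  simp only [Function.iterate_succ_apply', Function.surjInv_eq hr]

theorem IsPathFrom.exists_extend (hr : Function.Surjective r) (hz : IsPathFrom r x z) (m : ℕ)
    {y : X} (hy : r y = r (z m)) :
    ∃ w, IsPathFrom r x w ∧ (∀ i < m, w i = z i) ∧ w m = y := by
  set s := Function.surjInv hr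
  have hs : ∀ y, r (s y) = y := Function.surjInv_eq hr
  refine ⟨fun i => if i < m then z i else s^[i - m] y, ⟨?_, fun n => ?_⟩,
    fun i hi => if_pos hi, by simp⟩
  · dsimp only
    split_ifs with h
    · exact hz.1
    · rw [Nat.eq_zero_of_not_pos h] at hy ⊢
      simpa [hz.1] using hy
  · dsimp only
    rcases lt_trichotomy (n + 1) m with h | h | h
    · simp only [h, (Nat.lt_succ_self n).trans h, if_true, hz.2]
    · subst h
      simp [hy, hz.2]
    · have hn : ¬ n < m := by omega
      simp only [show ¬ n + 1 < m by omega, hn, if_false]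
      rw [show n + 1 - m = n - m + 1 by omega, Function.iterate_succ_apply', hs]

theorem finite_iterate_preimage_singleton (hr_fin : ∀ x : X, (r ⁻¹' {x}).Finite) (n : ℕ)
    (x : X) : (r^[n] ⁻¹' {x}).Finite := by
  induction n with
  | zero => simp
  | succ n ih =>
    rw [Function.iterate_succ, Set.preimage_comp]
    exact ih.preimage' fun y _ => hr_fin y

theorem finite_pathCylinders (hr_fin : ∀ x : X, (r ⁻¹' {x}).Finite) (x : X) (m : ℕ) :
    ((fun z => pathCylinder r x z m) '' {z | IsPathFrom r x z}).Finite := by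
  let cyl : (Fin m → X) → Set (ℕ → X) := fun p =>
    {w | IsPathFrom r x w ∧ ∀ i : Fin m, w i = p i}
  refine ((Set.Finite.pi fun i : Fin m =>
    finite_iterate_preimage_singleton hr_fin (i + 1) x).image cyl).subset ?_
  rintro _ ⟨z, hz, rfl⟩
  refine ⟨fun i => z i, fun i _ => hz.iterate_succ_apply i, ?_⟩
  ext w
  simp [cyl, pathCylinder, Fin.forall_iff]

theorem mem_pathCylinder_self (hz : IsPathFrom r x z) (m : ℕ) : z ∈ pathCylinder r x z m :=
  ⟨hz, fun _ _ => rfl⟩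

theorem pathCylinder_eq_of_mem (hw : w ∈ pathCylinder r x z m) :
    pathCylinder r x w m = pathCylinder r x z m := by
  ext v
  refine and_congr_right fun _ => forall₂_congr fun i hi => ?_
  rw [hw.2 i hi]

end Paths

section Measure

variable {X : Type*} [MeasurableSpace X] [MeasurableEq X] {r : X → X} {x : X}

theorem measurableSet_setOf_isPathFrom (hr : Measurable r) (x : X) :
    MeasurableSet {z : ℕ → X | IsPathFrom r x z} := by
  have : {z : ℕ → X | IsPathFrom r x z} =
      {z | r (z 0) = x} ∩ ⋂ n, {z | r (z (n + 1)) = z n} := by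
    ext z; simp [IsPathFrom]
  rw [this]
  exact (measurableSet_eq_fun (by fun_prop) measurable_const).inter
    (.iInter fun n => measurableSet_eq_fun (by fun_prop) (by fun_prop))

theorem measurableSet_pathCylinder (hr : Measurable r) (x : X) (z : ℕ → X) (m : ℕ) :
    MeasurableSet (pathCylinder r x z m) := by
  have : pathCylinder r x z m =
      {w | IsPathFrom r x w} ∩ ⋂ i, ⋂ (_ : i < m), {w | w i = z i} := by
    ext w; simp [pathCylinder]
  rw [this]
  exact (measurableSet_setOf_isPathFrom hr x).inter
    (.iInter fun i => .iInter fun _ =>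
      measurableSet_eq_fun (measurable_pi_apply i) measurable_const)

end Measure

theorem Set.indicator_one_mul {α : Type*} (s : Set α) (g : α → ℝ) :
    (fun a => s.indicator 1 a * g a) = s.indicator g := by
  ext a
  by_cases ha : a ∈ s <;> simp [ha]

theorem integrable_comp_apply {X : Type*} [MeasurableSpace X] {μ : Measure (ℕ → X)}
    [IsFiniteMeasure μ] {k : X → ℝ} (hk : Measurable k) {M : ℝ} (hM : ∀ y, |k y| ≤ M)
    (n : ℕ) :
    Integrable (fun w => k (w n)) μ :=
  .of_bound (hk.comp (measurable_pi_apply n)).aestronglyMeasurable M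
    (ae_of_all _ fun w => hM (w n))

def IsKolmogorovMeasure {X : Type*} [MeasurableSpace X] (r : X → X) (W : X → ℝ) (x : X)
    (P : Measure (ℕ → X)) : Prop :=
  ∀ z n, IsPathFrom r x z →
    P (pathCylinder r x z n) = ∏ i ∈ Finset.range n, ENNReal.ofReal (W (z i))

namespace IsKolmogorovMeasure

variable {X : Type*} [MeasurableSpace X] {r : X → X} {x : X} {W : X → ℝ}
  {P : Measure (ℕ → X)} {z : ℕ → X} {m : ℕ}

theorem measure_pathCylinder_inter_eq (hP : IsKolmogorovMeasure r W x P)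
    (hr_surj : Function.Surjective r) (hz : IsPathFrom r x z) {y : X} (hy : r y = r (z m)) :
    P (pathCylinder r x z m ∩ {w | w m = y}) =
      P (pathCylinder r x z m) * ENNReal.ofReal (W y) := by
  obtain ⟨w, hw, hwz, hwm⟩ := hz.exists_extend hr_surj m hy
  have hcyl : pathCylinder r x z m ∩ {v | v m = y} = pathCylinder r x w (m + 1) := by
    ext v
    simp only [pathCylinder, Set.mem_inter_iff, Set.mem_ofPred_eq, Nat.forall_lt_succ_right, hwm,
      and_assoc]
    refine and_congr_right fun _ => and_congr_left fun _ => forall₂_congr fun i hi => ?_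
    rw [hwz i hi]
  rw [hcyl, hP w _ hw, hP z _ hz, Finset.prod_range_succ, hwm]
  congr 1
  exact Finset.prod_congr rfl fun i hi => by rw [hwz i (Finset.mem_range.1 hi)]

variable [MeasurableEq X]

theorem ae_isPathFrom [IsProbabilityMeasure P] (hP : IsKolmogorovMeasure r W x P)
    (hr : Measurable r) (hr_surj : Function.Surjective r) : ∀ᵐ w ∂P, IsPathFrom r x w := by
  obtain ⟨z, hz⟩ := exists_isPathFrom hr_surj x
  rw [ae_iff_measure_eq (measurableSet_setOf_isPathFrom hr x).nullMeasurableSet, measure_univ]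
  simpa [pathCylinder] using hP z 0 hz

theorem setIntegral_pathCylinder_apply [IsFiniteMeasure P] (hP : IsKolmogorovMeasure r W x P)
    (hr : Measurable r) (hr_fin : ∀ x : X, (r ⁻¹' {x}).Finite)
    (hr_surj : Function.Surjective r) (hW : ∀ y, 0 ≤ W y) (hz : IsPathFrom r x z)
    (k : X → ℝ) :
    ∫ w in pathCylinder r x z m, k (w m) ∂P =
      P.real (pathCylinder r x z m) * RuelleOp r W k (r (z m)) := by
  set C := pathCylinder r x z m
  set F := (hr_fin (r (z m))).toFinset
  have hC : MeasurableSet C := measurableSet_pathCylinder hr x z m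
  have hlevel : ∀ y, MeasurableSet {w : ℕ → X | w m = y} := fun y =>
    measurableSet_eq_fun (measurable_pi_apply m) measurable_const
  calc ∫ w in C, k (w m) ∂P
      = ∫ w in C, ∑ y ∈ F, {w | w m = y}.indicator (fun _ => k y) w ∂P := by
        refine setIntegral_congr_fun hC fun w hw => ?_
        have hwF : w m ∈ F := by
          simpa [F] using hz.apply_eq_of_agree hw.1 hw.2
        rw [Finset.sum_eq_single_of_mem (f := fun y => {w | w m = y}.indicator (fun _ => k y) w)
          (w m) hwF fun y _ hy =>
            Set.indicator_of_notMem (s := {v : ℕ → X | v m = y}) (fun h => hy h.symm) _,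
          Set.indicator_of_mem (s := {v : ℕ → X | v m = w m}) rfl]
    _ = ∑ y ∈ F, P.real (C ∩ {w | w m = y}) * k y := by
        rw [integral_finsetSum _ fun y _ => (integrable_const (k y)).indicator (hlevel y)]
        simp only [setIntegral_indicator (hlevel _), setIntegral_const, smul_eq_mul]
    _ = ∑ y ∈ F, P.real C * (W y * k y) := by
        refine Finset.sum_congr rfl fun y hy => ?_
        have hy : r y = r (z m) := by simpa [F] using hy
        rw [measureReal_def, hP.measure_pathCylinder_inter_eq hr_surj hz hy, ENNReal.toReal_mul,
          ENNReal.toReal_ofReal (hW y), ← measureReal_def]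
        ring
    _ = P.real C * RuelleOp r W k (r (z m)) := by
        rw [← Finset.mul_sum, RuelleOp, finsum_mem_eq_finite_toFinset_sum]

theorem integral_eq_sum_setIntegral_pathCylinder [IsProbabilityMeasure P]
    (hP : IsKolmogorovMeasure r W x P) (hr : Measurable r)
    (hr_fin : ∀ x : X, (r ⁻¹' {x}).Finite) (hr_surj : Function.Surjective r) (m : ℕ)
    {G : (ℕ → X) → ℝ} (hG : Integrable G P) :
    ∫ w, G w ∂P =
      ∑ C ∈ (finite_pathCylinders hr_fin x m).toFinset, ∫ w in C, G w ∂P := by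
  have hmeas : ∀ C ∈ (finite_pathCylinders hr_fin x m).toFinset, MeasurableSet C := by
    intro C hC
    obtain ⟨z, -, rfl⟩ := (Set.Finite.mem_toFinset _).1 hC
    exact measurableSet_pathCylinder hr x z m
  have hdisj : Set.PairwiseDisjoint
      ((finite_pathCylinders hr_fin x m).toFinset : Set (Set (ℕ → X))) id := by
    intro C hC D hD hCD
    simp only [Finset.mem_coe, Set.Finite.mem_toFinset] at hC hD
    obtain ⟨z, -, rfl⟩ := hC
    obtain ⟨z', -, rfl⟩ := hD
    refine Set.disjoint_left.2 fun w hw hw' => hCD ?_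
    dsimp only [id] at hw hw' ⊢
    rw [← pathCylinder_eq_of_mem hw, pathCylinder_eq_of_mem hw']
  have hcover :
      ⋃ C ∈ (finite_pathCylinders hr_fin x m).toFinset, C = {w | IsPathFrom r x w} := by
    ext w
    simp only [Set.Finite.mem_toFinset, Set.mem_iUnion, Set.mem_image, exists_prop]
    exact ⟨fun ⟨_, ⟨_, _, rfl⟩, hw⟩ => hw.1,
      fun hw => ⟨_, ⟨w, hw, rfl⟩, mem_pathCylinder_self hw m⟩⟩
  rw [← integral_biUnion_finset _ hmeas hdisj fun C _ => hG.integrableOn, hcover,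
    Measure.restrict_eq_self_of_ae_mem (s := {w | IsPathFrom r x w})
      (hP.ae_isPathFrom hr hr_surj)]

theorem integral_mul_apply_eq_integral_mul_ruelleOp [IsProbabilityMeasure P]
    (hP : IsKolmogorovMeasure r W x P) (hr : Measurable r)
    (hr_fin : ∀ x : X, (r ⁻¹' {x}).Finite) (hr_surj : Function.Surjective r)
    (hW : ∀ y, 0 ≤ W y) {f : (ℕ → X) → ℝ} (hf : DependsOn f (Set.Iio m)) (k : X → ℝ)
    (hk : Integrable (fun w => f w * k (w m)) P)
    (hRk : Integrable (fun w => f w * RuelleOp r W k (r (w m))) P) :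
    ∫ w, f w * k (w m) ∂P = ∫ w, f w * RuelleOp r W k (r (w m)) ∂P := by
  rw [hP.integral_eq_sum_setIntegral_pathCylinder hr hr_fin hr_surj m hk,
    hP.integral_eq_sum_setIntegral_pathCylinder hr hr_fin hr_surj m hRk]
  refine Finset.sum_congr rfl fun C hC => ?_
  obtain ⟨z, hz, rfl⟩ := (Set.Finite.mem_toFinset _).1 hC
  have hC := measurableSet_pathCylinder hr x z m
  have hf_eq : ∀ w ∈ pathCylinder r x z m, f w = f z := fun w hw => hf fun i hi => hw.2 i hi
  calc ∫ w in pathCylinder r x z m, f w * k (w m) ∂P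
      = ∫ w in pathCylinder r x z m, f z * k (w m) ∂P :=
        setIntegral_congr_fun hC fun w hw => by rw [hf_eq w hw]
    _ = ∫ _ in pathCylinder r x z m, f z * RuelleOp r W k (r (z m)) ∂P := by
        rw [integral_const_mul, hP.setIntegral_pathCylinder_apply hr hr_fin hr_surj hW hz,
          setIntegral_const, smul_eq_mul]
        ring
    _ = ∫ w in pathCylinder r x z m, f w * RuelleOp r W k (r (w m)) ∂P :=
        setIntegral_congr_fun hC fun w hw => by rw [hf_eq w hw, hz.apply_eq_of_agree hw.1 hw.2]

variable [IsProbabilityMeasure P] {h : X → ℝ} {M : ℝ}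

theorem integral_apply_zero_of_harmonic (hP : IsKolmogorovMeasure r W x P) (hr : Measurable r)
    (hr_fin : ∀ x : X, (r ⁻¹' {x}).Finite) (hr_surj : Function.Surjective r)
    (hW : ∀ y, 0 ≤ W y) (hh : ∀ y, RuelleOp r W h y = h y) :
    ∫ w, h (w 0) ∂P = h x := by
  obtain ⟨z, hz⟩ := exists_isPathFrom hr_surj x
  have hpaths : pathCylinder r x z 0 = {w | IsPathFrom r x w} := by
    ext w; simp [pathCylinder]
  have hfull : P.real (pathCylinder r x z 0) = 1 := by
    simp [measureReal_def, hP z 0 hz]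
  rw [← Measure.restrict_eq_self_of_ae_mem (μ := P) (s := pathCylinder r x z 0)
      (hpaths ▸ hP.ae_isPathFrom hr hr_surj),
    hP.setIntegral_pathCylinder_apply hr hr_fin hr_surj hW hz, hfull, one_mul, hh, hz.1]

theorem setIntegral_apply_succ_of_harmonic (hP : IsKolmogorovMeasure r W x P)
    (hr : Measurable r) (hr_fin : ∀ x : X, (r ⁻¹' {x}).Finite)
    (hr_surj : Function.Surjective r) (hW : ∀ y, 0 ≤ W y) (hh_meas : Measurable h)
    (hM : ∀ y, |h y| ≤ M) (hh : ∀ y, RuelleOp r W h y = h y) (n : ℕ) {s : Set (ℕ → X)}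
    (hs : MeasurableSet[Filtration.piLE n] s) :
    ∫ w in s, h (w n) ∂P = ∫ w in s, h (w (n + 1)) ∂P := by
  have hs' : MeasurableSet s := Filtration.piLE.le n s hs
  have hind : Measurable[Filtration.piLE n] (s.indicator (1 : (ℕ → X) → ℝ)) :=
    measurable_const.indicator hs
  have hdep : DependsOn (s.indicator (1 : (ℕ → X) → ℝ)) (Set.Iio (n + 1)) :=
    hind.dependsOn_of_piLE.mono fun i hi => Nat.lt_succ_of_le hi
  have hnext : (fun w => s.indicator 1 w * h (w n)) =ᵐ[P]
      fun w => s.indicator 1 w * RuelleOp r W h (r (w (n + 1))) := by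
    filter_upwards [hP.ae_isPathFrom hr hr_surj] with w hw
    rw [hh, hw.2]
  have hint : ∀ i, Integrable (fun w => s.indicator 1 w * h (w i)) P := fun i => by
    rw [Set.indicator_one_mul]
    exact (integrable_comp_apply hh_meas hM i).indicator hs'
  have hset : ∀ i, ∫ w in s, h (w i) ∂P = ∫ w, s.indicator 1 w * h (w i) ∂P := fun i => by
    rw [Set.indicator_one_mul, integral_indicator hs']
  rw [hset, hset, integral_congr_ae hnext,
    hP.integral_mul_apply_eq_integral_mul_ruelleOp hr hr_fin hr_surj hW
    hdep h (hint (n + 1)) ((hint n).congr hnext)]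

theorem martingale_apply_of_harmonic (hP : IsKolmogorovMeasure r W x P) (hr : Measurable r)
    (hr_fin : ∀ x : X, (r ⁻¹' {x}).Finite) (hr_surj : Function.Surjective r)
    (hW : ∀ y, 0 ≤ W y) (hh_meas : Measurable h) (hM : ∀ y, |h y| ≤ M)
    (hh : ∀ y, RuelleOp r W h y = h y) :
    Martingale (fun n w => h (w n)) Filtration.piLE P := by
  refine martingale_of_setIntegral_eq_succ (fun n => ?_) (integrable_comp_apply hh_meas hM)
    fun n _ hs => hP.setIntegral_apply_succ_of_harmonic hr hr_fin hr_surj hW hh_meas hM hh n hs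
  have hrestrict : Measurable[Filtration.piLE n] (Preorder.restrictLe (π := fun _ => X) n) :=
    Measurable.of_comap_le le_rfl
  have heval : Measurable[Filtration.piLE n] fun w : ℕ → X => w n :=
    (measurable_pi_apply (⟨n, Set.mem_Iic.2 le_rfl⟩ : Set.Iic n)).comp hrestrict
  exact (hh_meas.comp heval).stronglyMeasurable

theorem integral_apply_of_harmonic (hP : IsKolmogorovMeasure r W x P) (hr : Measurable r)
    (hr_fin : ∀ x : X, (r ⁻¹' {x}).Finite) (hr_surj : Function.Surjective r)
    (hW : ∀ y, 0 ≤ W y) (hh_meas : Measurable h) (hM : ∀ y, |h y| ≤ M)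
    (hh : ∀ y, RuelleOp r W h y = h y) (n : ℕ) :
    ∫ w, h (w n) ∂P = h x := by
  induction n with
  | zero => exact hP.integral_apply_zero_of_harmonic hr hr_fin hr_surj hW hh
  | succ n ih =>
    have := hP.setIntegral_apply_succ_of_harmonic hr hr_fin hr_surj hW hh_meas hM hh n
      MeasurableSet.univ
    rwa [setIntegral_univ, setIntegral_univ, ih, eq_comm] at this

theorem ae_tendsto_liminf_of_harmonic (hP : IsKolmogorovMeasure r W x P) (hr : Measurable r)
    (hr_fin : ∀ x : X, (r ⁻¹' {x}).Finite) (hr_surj : Function.Surjective r)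
    (hW : ∀ y, 0 ≤ W y) (hh_meas : Measurable h) (hM : ∀ y, |h y| ≤ M)
    (hh : ∀ y, RuelleOp r W h y = h y) :
    ∀ᵐ w ∂P, Tendsto (fun n => h (w n)) atTop (𝓝 (liminf (fun n => h (w n)) atTop)) := by
  have hbdd : ∀ n, eLpNorm (fun w : ℕ → X => h (w n)) 1 P ≤ M.toNNReal := fun n => by
    simpa [ENNReal.ofReal] using
      eLpNorm_le_of_ae_bound (p := 1) (μ := P) (ae_of_all _ fun w => hM (w n))
  filter_upwards [(hP.martingale_apply_of_harmonic hr hr_fin hr_surj hW hh_meas hM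
    hh).submartingale.exists_ae_tendsto_of_bdd hbdd] with w ⟨c, hc⟩
  rwa [hc.liminf_eq]

end IsKolmogorovMeasure

theorem stmt1_general
    {X : Type*} [MetricSpace X] [CompactSpace X] [MeasurableSpace X] [BorelSpace X]
    (r : X → X) (hr_cont : Continuous r) (hr_surj : Function.Surjective r)
    (hr_fin : ∀ x : X, (r ⁻¹' {x}).Finite)
    (W : X → ℝ) (hW_nonneg : ∀ x, 0 ≤ W x)
    -- the family of Kolmogorov path-space measures `P_x`
    (P : X → Measure (ℕ → X)) (hP_prob : ∀ x, IsProbabilityMeasure (P x))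
    (hP_cyl : ∀ (x : X) (z : ℕ → X) (n : ℕ), IsPathFrom r x z →
      P x (pathCylinder r x z n) = ∏ i ∈ Finset.range n, ENNReal.ofReal (W (z i)))
    -- `h` is a bounded measurable harmonic function
    (h : X → ℝ) (hh_meas : Measurable h) (hh_bdd : ∃ M : ℝ, ∀ x, |h x| ≤ M)
    (hh_harm : ∀ x, RuelleOp r W h x = h x) :
    ∃ V : (ℕ → X) → ℝ, Measurable V ∧
      -- the limit `V(z) = lim_n h(z_n)` exists `P_x`-a.e. and defines `V`
      (∀ x : X, ∀ᵐ z ∂(P x), Tendsto (fun n => h (z n)) atTop (𝓝 (V z))) ∧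
      -- `V` is a cocycle
      (∀ z : ℕ → X, (∀ n, r (z (n + 1)) = z n) → V z = V (fun n => z (n + 1))) ∧
      -- and `h` is recovered from `V` by integration
      (∀ x : X, h x = ∫ z, V z ∂(P x)) := by
  obtain ⟨M, hM⟩ := hh_bdd
  have hr := hr_cont.measurable
  have hP : ∀ x, IsKolmogorovMeasure r W x (P x) := hP_cyl
  have hlim : ∀ x, ∀ᵐ z ∂(P x), Tendsto (fun n => h (z n)) atTop
      (𝓝 (liminf (fun n => h (z n)) atTop)) := fun x =>
    (hP x).ae_tendsto_liminf_of_harmonic hr hr_fin hr_surj hW_nonneg hh_meas hM hh_harm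
  refine ⟨fun z => liminf (fun n => h (z n)) atTop,
    .liminf fun n => hh_meas.comp (measurable_pi_apply n), hlim,
    fun z _ => (liminf_nat_add (fun n => h (z n)) 1).symm, fun x => ?_⟩
  have hmean : Tendsto (fun n => ∫ z, h (z n) ∂(P x)) atTop (𝓝 (h x)) := by
    simp only [(hP x).integral_apply_of_harmonic hr hr_fin hr_surj hW_nonneg hh_meas hM
      hh_harm, tendsto_const_nhds]
  exact tendsto_nhds_unique hmean <| tendsto_integral_of_dominated_convergence (fun _ => M)
    (fun n => (hh_meas.comp (measurable_pi_apply n)).aestronglyMeasurable) (integrable_const M)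
    (fun n => ae_of_all _ fun z => hM (z n)) (hlim x)

theorem stmt1
    {X : Type*} [MetricSpace X] [CompactSpace X] [MeasurableSpace X] [BorelSpace X]
    (r : X → X) (hr_cont : Continuous r) (hr_surj : Function.Surjective r)
    (hr_fin : ∀ x : X, (r ⁻¹' {x}).Finite)
    (W : X → ℝ) (hW_meas : Measurable W) (hW_nonneg : ∀ x, 0 ≤ W x)
    (hW1 : ∀ x : X, (∑ᶠ y ∈ r ⁻¹' {x}, W y) = 1)
    -- the family of Kolmogorov path-space measures `P_x`
    (P : X → Measure (ℕ → X)) (hP_prob : ∀ x, IsProbabilityMeasure (P x))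
    (hP_cyl : ∀ (x : X) (z : ℕ → X) (n : ℕ), IsPathFrom r x z →
      P x (pathCylinder r x z n) = ∏ i ∈ Finset.range n, ENNReal.ofReal (W (z i)))
    -- `h` is a bounded measurable harmonic function
    (h : X → ℝ) (hh_meas : Measurable h) (hh_bdd : ∃ M : ℝ, ∀ x, |h x| ≤ M)
    (hh_harm : ∀ x, RuelleOp r W h x = h x) :
    ∃ V : (ℕ → X) → ℝ, Measurable V ∧
      -- the limit `V(z) = lim_n h(z_n)` exists `P_x`-a.e. and defines `V`
      (∀ x : X, ∀ᵐ z ∂(P x), Tendsto (fun n => h (z n)) atTop (𝓝 (V z))) ∧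
      -- `V` is a cocycle
      (∀ z : ℕ → X, (∀ n, r (z (n + 1)) = z n) → V z = V (fun n => z (n + 1))) ∧
      -- and `h` is recovered from `V` by integration
      (∀ x : X, h x = ∫ z, V z ∂(P x)) :=
  stmt1_general r hr_cont hr_surj hr_fin W hW_nonneg P hP_prob hP_cyl h hh_meas hh_bdd hh_harm
end

section
/- Let X be a compact metric space and r : X → X continuous, surjective, finite-to-one. If W ∈ C(X), W ≥ 0, R_W 1 = 1, and there exist no W-cycles, then every Borel probability measure ν with ν(R_W f) = ν(f) for all f ∈ C(X) has no atoms, i.e. ν({x}) = 0 for every x ∈ X. -/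
open MeasureTheory Filter Topology

/-- `C` is an `n`-cycle for `r` (for some `n ≥ 1`, the minimal period):
`C = {x, r x, …, r^[n-1] x}` with `r^[n] x = x`. -/
def IsCycle {X : Type*} (r : X → X) (C : Set X) : Prop :=
  ∃ (x : X) (n : ℕ), 0 < n ∧ r^[n] x = x ∧
    (∀ m : ℕ, 0 < m → r^[m] x = x → n ≤ m) ∧
    C = (fun k => r^[k] x) '' Set.Iio n

/-- A `W`-cycle: a cycle on which `W` is identically `1`. -/
def IsWCycle {X : Type*} (r : X → X) (W : X → ℝ) (C : Set X) : Prop :=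
  IsCycle r C ∧ ∀ y ∈ C, W y = 1

/-!
Testing `ν` against continuous bumps concentrating at a point `y` gives
`ν {y} ≤ W y · ν {r y}`: the bump transfers to `W y` times a bump at `r y`, plus mass on the
images of small punctured balls around `y`, which shrink to the empty set. Since `W ≤ 1`, the mass
of an atom does not decrease along its forward orbit, and a finite measure has only finitely many
atoms of mass at least a given `c > 0`, so the orbit of an atom returns to itself. On the
resulting cycle the masses are constant, which forces `W = 1` there: a `W`-cycle.
-/

open Function Set Metric

section RuelleOp

variable {X : Type*} {r : X → X} {W f : X → ℝ} {x : X}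

lemma ruelleOp_eq_sum (hfin : (r ⁻¹' {x}).Finite) :
    RuelleOp r W f x = ∑ y ∈ hfin.toFinset, W y * f y :=
  finsum_mem_eq_finite_toFinset_sum _ hfin

lemma le_one_of_finsum_preimage_eq_one {y : X} (hfin : (r ⁻¹' {r y}).Finite)
    (hW0 : ∀ z, 0 ≤ W z) (hW1 : ∑ᶠ z ∈ r ⁻¹' {r y}, W z = 1) : W y ≤ 1 := by
  rw [finsum_mem_eq_finite_toFinset_sum _ hfin] at hW1
  exact hW1 ▸ Finset.single_le_sum (fun z _ => hW0 z) (hfin.mem_toFinset.2 rfl)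

lemma ruelleOp_nonneg (hW0 : ∀ y, 0 ≤ W y) (hf0 : ∀ y, 0 ≤ f y) : 0 ≤ RuelleOp r W f x :=
  finsum_nonneg fun y => finsum_nonneg fun _ => mul_nonneg (hW0 y) (hf0 y)

lemma ruelleOp_le_one (hfin : (r ⁻¹' {x}).Finite) (hW0 : ∀ y, 0 ≤ W y)
    (hW1 : ∑ᶠ y ∈ r ⁻¹' {x}, W y = 1) (hf1 : ∀ y, f y ≤ 1) : RuelleOp r W f x ≤ 1 := by
  rw [ruelleOp_eq_sum hfin, ← hW1, finsum_mem_eq_finite_toFinset_sum _ hfin]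
  exact Finset.sum_le_sum fun y _ => mul_le_of_le_one_right (hW0 y) (hf1 y)

lemma ruelleOp_eq_zero (hf : ∀ y ∈ r ⁻¹' {x}, f y = 0) : RuelleOp r W f x = 0 :=
  finsum_mem_eq_zero_of_forall_eq_zero fun y hy => by rw [hf y hy, mul_zero]

lemma ruelleOp_apply_eq {y : X} (hfin : (r ⁻¹' {r y}).Finite) (hfy : f y = 1)
    (hf : ∀ z ∈ r ⁻¹' {r y}, z ≠ y → f z = 0) : RuelleOp r W f (r y) = W y := by
  rw [ruelleOp_eq_sum hfin, Finset.sum_eq_single_of_mem y (hfin.mem_toFinset.2 rfl), hfy, mul_one]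
  intro z hz hzy
  rw [hf z (hfin.mem_toFinset.1 hz) hzy, mul_zero]

end RuelleOp

lemma finite_setOf_le_measureReal_singleton {X : Type*} [MeasurableSpace X]
    [MeasurableSingletonClass X] (ν : Measure X) [IsFiniteMeasure ν] {c : ℝ}
    (hc : 0 < c) : {z : X | c ≤ ν.real {z}}.Finite :=
  (ν.finite_const_le_meas_of_disjoint_iUnion (ENNReal.ofReal_pos.2 hc) (As := fun z => {z})
    measurableSet_singleton (fun _ _ hab => disjoint_singleton.2 hab)
    (measure_ne_top _ _)).subset
    fun _ hz => (ENNReal.ofReal_le_iff_le_toReal (measure_ne_top _ _)).2 hz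

section PseudoMetric

variable {X : Type*} [PseudoMetricSpace X]

lemma exists_pos_le_dist_of_notMem {s : Set X} (hs : IsClosed s) {y : X} (hy : y ∉ s) :
    ∃ ε > 0, ∀ z ∈ s, ε ≤ dist z y := by
  obtain ⟨ε, hε, hball⟩ := Metric.isOpen_iff.1 hs.isOpen_compl y hy
  exact ⟨ε, hε, fun z hz => not_lt.1 fun h => hball (mem_ball.2 h) hz⟩

lemma ruelleOp_le_indicator_add_indicator {r : X → X} (hr_fin : ∀ x : X, (r ⁻¹' {x}).Finite)
    {W f : X → ℝ} (hW0 : ∀ x, 0 ≤ W x) (hW1 : ∀ x : X, ∑ᶠ y ∈ r ⁻¹' {x}, W y = 1)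
    (hf1 : ∀ z, f z ≤ 1) {y : X} (hfy : f y = 1) (hf_sep : ∀ z ∈ r ⁻¹' {r y}, z ≠ y → f z = 0)
    {δ : ℝ} (hf_far : ∀ z, δ < dist z y → f z = 0) (x : X) :
    RuelleOp r W f x ≤
      ({r y} : Set X).indicator (fun _ => W y) x + (r '' closedBall y δ \ {r y}).indicator 1 x := by
  by_cases hx : x = r y
  · subst hx
    rw [ruelleOp_apply_eq (hr_fin _) hfy hf_sep, indicator_of_mem (mem_singleton _),
      indicator_of_notMem fun h => h.2 rfl, add_zero]
  rw [indicator_of_notMem (notMem_singleton_iff.2 hx), zero_add]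
  by_cases hxE : x ∈ r '' closedBall y δ
  · rw [indicator_of_mem (show x ∈ r '' closedBall y δ \ {r y} from ⟨hxE, hx⟩), Pi.one_apply]
    exact ruelleOp_le_one (hr_fin x) hW0 (hW1 x) hf1
  · rw [indicator_of_notMem fun h => hxE h.1, ruelleOp_eq_zero]
    exact fun z hz => hf_far z (lt_of_not_ge fun h => hxE ⟨z, mem_closedBall.2 h, hz⟩)

end PseudoMetric

section Atoms

variable {X : Type*} [MetricSpace X] [ProperSpace X] [MeasurableSpace X] [BorelSpace X]

lemma measurableSet_image_closedBall_sdiff {r : X → X} (hr_cont : Continuous r) (y : X) (δ : ℝ) :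
    MeasurableSet (r '' closedBall y δ \ {r y}) :=
  ((isCompact_closedBall y δ).image hr_cont).isClosed.measurableSet.diff
    (measurableSet_singleton _)

lemma measureReal_singleton_le_add {r : X → X} (hr_cont : Continuous r)
    (hr_fin : ∀ x : X, (r ⁻¹' {x}).Finite) {W : X → ℝ} (hW0 : ∀ x, 0 ≤ W x)
    (hW1 : ∀ x : X, ∑ᶠ y ∈ r ⁻¹' {x}, W y = 1) (ν : Measure X) [IsFiniteMeasure ν]
    (hν_inv : ∀ f : X → ℝ, Continuous f → ∫ x, RuelleOp r W f x ∂ν = ∫ x, f x ∂ν)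
    {y : X} {δ : ℝ} (hδ : 0 < δ) (hsep : ∀ z ∈ r ⁻¹' {r y}, z ≠ y → δ ≤ dist z y) :
    ν.real {y} ≤ W y * ν.real {r y} + ν.real (r '' closedBall y δ \ {r y}) := by
  obtain ⟨f, hf_far, hfy, hf01⟩ := exists_continuous_zero_one_of_isClosed isOpen_ball.isClosed_compl
    isClosed_singleton (disjoint_singleton_right.2 fun h => h (mem_ball_self (x := y) hδ))
  have hf_far' : ∀ z, δ ≤ dist z y → f z = 0 := fun z hz => hf_far (not_lt.2 hz)
  have hf_int : Integrable f ν :=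
    (integrable_const 1).mono' f.continuous.aestronglyMeasurable
      (ae_of_all _ fun z => by simpa [abs_of_nonneg (hf01 z).1] using (hf01 z).2)
  set E := r '' closedBall y δ \ {r y}
  have hE : MeasurableSet E := measurableSet_image_closedBall_sdiff hr_cont y δ
  have hbound := ruelleOp_le_indicator_add_indicator hr_fin hW0 hW1 (fun z => (hf01 z).2)
    (hfy rfl) (fun z hz hzy => hf_far' z (hsep z hz hzy)) (fun z hz => hf_far' z hz.le)
  calc ν.real {y} = ∫ z, ({y} : Set X).indicator 1 z ∂ν := by
        rw [integral_indicator_one (measurableSet_singleton y)]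
    _ ≤ ∫ z, f z ∂ν := by
        exact integral_mono ((integrable_const 1).indicator (measurableSet_singleton y)) hf_int
          (indicator_le' (fun _ hz => (hfy hz).ge) fun z _ => (hf01 z).1)
    _ = ∫ z, RuelleOp r W f z ∂ν := (hν_inv f f.continuous).symm
    _ ≤ ∫ z, (({r y} : Set X).indicator (fun _ => W y) z + E.indicator 1 z) ∂ν :=
        integral_mono_of_nonneg (ae_of_all _ fun _ => ruelleOp_nonneg hW0 fun z => (hf01 z).1)
          (((integrable_const _).indicator (measurableSet_singleton _)).add
            ((integrable_const 1).indicator hE)) (ae_of_all _ hbound)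
    _ = W y * ν.real {r y} + ν.real E := by
        rw [integral_add ((integrable_const _).indicator (measurableSet_singleton _))
            ((integrable_const 1).indicator hE), integral_indicator_const _ (measurableSet_singleton _),
          integral_indicator_one hE, smul_eq_mul, mul_comm]

lemma tendsto_measureReal_image_closedBall_sdiff {r : X → X} (hr_cont : Continuous r)
    (ν : Measure X) [IsFiniteMeasure ν] (y : X) :
    Tendsto (fun n : ℕ => ν.real (r '' closedBall y (1 / (n + 1)) \ {r y})) atTop (𝓝 0) := by
  set E : ℕ → Set X := fun n => r '' closedBall y (1 / (n + 1)) \ {r y}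
  have hE : ∀ n, MeasurableSet (E n) := fun n => measurableSet_image_closedBall_sdiff hr_cont y _
  have hE_anti : Antitone E := fun m n hmn =>
    sdiff_subset_sdiff_left (image_mono (closedBall_subset_closedBall (Nat.one_div_le_one_div hmn)))
  have hE_empty : ⋂ n, E n = ∅ := by
    refine eq_empty_iff_forall_notMem.2 fun x hx => ?_
    rw [mem_iInter] at hx
    have hy : y ∉ r ⁻¹' {x} := fun h => (hx 0).2 h.symm
    obtain ⟨ε, hε, hfar⟩ := exists_pos_le_dist_of_notMem (isClosed_singleton.preimage hr_cont) hy
    obtain ⟨n, hn⟩ := exists_nat_one_div_lt hε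
    obtain ⟨⟨z, hz, rfl⟩, -⟩ := hx n
    exact (hfar z rfl).not_gt ((mem_closedBall.1 hz).trans_lt hn)
  have h := tendsto_measure_iInter_atTop (μ := ν) (fun n => (hE n).nullMeasurableSet) hE_anti
    ⟨0, measure_ne_top _ _⟩
  rw [hE_empty, measure_empty] at h
  exact (ENNReal.tendsto_toReal ENNReal.zero_ne_top).comp h

lemma measureReal_singleton_le_mul {r : X → X} (hr_cont : Continuous r)
    (hr_fin : ∀ x : X, (r ⁻¹' {x}).Finite) {W : X → ℝ} (hW0 : ∀ x, 0 ≤ W x)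
    (hW1 : ∀ x : X, ∑ᶠ y ∈ r ⁻¹' {x}, W y = 1) (ν : Measure X) [IsFiniteMeasure ν]
    (hν_inv : ∀ f : X → ℝ, Continuous f → ∫ x, RuelleOp r W f x ∂ν = ∫ x, f x ∂ν) (y : X) :
    ν.real {y} ≤ W y * ν.real {r y} := by
  obtain ⟨ε, hε, hsep⟩ := exists_pos_le_dist_of_notMem ((hr_fin (r y)).sdiff).isClosed
    (fun h : y ∈ r ⁻¹' {r y} \ {y} => h.2 rfl)
  obtain ⟨N, hN⟩ := exists_nat_one_div_lt hε
  have hbound : ∀ᶠ n : ℕ in atTop,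
      ν.real {y} ≤ W y * ν.real {r y} + ν.real (r '' closedBall y (1 / (n + 1)) \ {r y}) := by
    filter_upwards [eventually_ge_atTop N] with n hn
    refine measureReal_singleton_le_add hr_cont hr_fin hW0 hW1 ν hν_inv (by positivity)
      fun z hz hzy => ?_
    exact ((Nat.one_div_le_one_div hn).trans hN.le).trans (hsep z ⟨hz, hzy⟩)
  simpa using ge_of_tendsto
    ((tendsto_measureReal_image_closedBall_sdiff hr_cont ν y).const_add _) hbound

end Atoms

section Cycles

variable {X : Type*} {r : X → X}

lemma isCycle_image_iterate_minimalPeriod {x : X} {n : ℕ} (hn : 0 < n) (hx : IsPeriodicPt r n x) :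
    IsCycle r ((fun k => r^[k] x) '' Iio (minimalPeriod r x)) :=
  ⟨x, _, hx.minimalPeriod_pos hn, isPeriodicPt_minimalPeriod r x,
    fun _ hm hxm => IsPeriodicPt.minimalPeriod_le hm hxm, rfl⟩

lemma exists_isWCycle_of_le_mul_apply {W : X → ℝ} (m : X → ℝ) (hm0 : ∀ y, 0 ≤ m y)
    (hW : ∀ y, W y ≤ 1) (hm : ∀ y, m y ≤ W y * m (r y)) {x₀ : X} (hx₀ : 0 < m x₀)
    (hfin : {z | m x₀ ≤ m z}.Finite) : ∃ C, IsWCycle r W C := by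
  set o : ℕ → X := fun k => r^[k] x₀
  have ho : ∀ k, o (k + 1) = r (o k) := fun k => iterate_succ_apply' r k x₀
  have hstep : ∀ k, m (o k) ≤ m (o (k + 1)) := fun k =>
    (hm (o k)).trans <| (ho k).symm ▸ mul_le_of_le_one_left (hm0 _) (hW _)
  have hmono : Monotone (m ∘ o) := monotone_nat_of_le_succ hstep
  obtain ⟨i, j, hij, hoij⟩ :=
    hfin.exists_lt_map_eq_of_forall_mem (f := o) fun k => hmono (Nat.zero_le k)
  have hW_one : ∀ k, i ≤ k → k < j → W (o k) = 1 := by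
    intro k hik hkj
    have hconst : m (o (k + 1)) = m (o k) := le_antisymm
      (calc m (o (k + 1)) ≤ m (o j) := hmono hkj
        _ = m (o i) := by rw [hoij]
        _ ≤ m (o k) := hmono hik)
      (hstep k)
    have hk := hm (o k)
    rw [← ho, hconst] at hk
    exact le_antisymm (hW _) ((le_mul_iff_one_le_left (hx₀.trans_le (hmono (Nat.zero_le k)))).1 hk)
  have hp : 0 < j - i := Nat.sub_pos_of_lt hij
  have hper : IsPeriodicPt r (j - i) (o i) := by
    change r^[j - i] (r^[i] x₀) = r^[i] x₀
    rw [← iterate_add_apply, Nat.sub_add_cancel hij.le]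
    exact hoij.symm
  refine ⟨_, isCycle_image_iterate_minimalPeriod hp hper, ?_⟩
  rintro _ ⟨k, hk, rfl⟩
  have hkp : k < j - i := lt_of_lt_of_le hk (hper.minimalPeriod_le hp)
  change W (r^[k] (r^[i] x₀)) = 1
  rw [← iterate_add_apply]
  exact hW_one (k + i) (by omega) (by omega)

end Cycles

theorem stmt6_general
    {X : Type*} [MetricSpace X] [CompactSpace X] [MeasurableSpace X] [BorelSpace X]
    (r : X → X) (hr_cont : Continuous r)
    (hr_fin : ∀ x : X, (r ⁻¹' {x}).Finite)
    (W : X → ℝ) (hW_nonneg : ∀ x, 0 ≤ W x)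
    (hW1 : ∀ x : X, (∑ᶠ y ∈ r ⁻¹' {x}, W y) = 1)
    -- there are no `W`-cycles
    (hnoWcycle : ¬∃ C : Set X, IsWCycle r W C)
    (ν : Measure X) [IsProbabilityMeasure ν]
    (hν_inv : ∀ f : X → ℝ, Continuous f →
      (∫ x, RuelleOp r W f x ∂ν) = ∫ x, f x ∂ν) :
    ∀ x : X, ν {x} = 0 := by
  intro x₀
  by_contra hx₀
  have hpos : 0 < ν.real {x₀} := ENNReal.toReal_pos hx₀ (measure_ne_top _ _)
  exact hnoWcycle <| exists_isWCycle_of_le_mul_apply (fun y => ν.real {y})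
    (fun _ => measureReal_nonneg)
    (fun y => le_one_of_finsum_preimage_eq_one (hr_fin _) hW_nonneg (hW1 _))
    (measureReal_singleton_le_mul hr_cont hr_fin hW_nonneg hW1 ν hν_inv) hpos
    (finite_setOf_le_measureReal_singleton ν hpos)

theorem stmt6
    {X : Type*} [MetricSpace X] [CompactSpace X] [MeasurableSpace X] [BorelSpace X]
    (r : X → X) (hr_cont : Continuous r) (hr_surj : Function.Surjective r)
    (hr_fin : ∀ x : X, (r ⁻¹' {x}).Finite)
    (W : X → ℝ) (hW_cont : Continuous W) (hW_nonneg : ∀ x, 0 ≤ W x)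
    (hW1 : ∀ x : X, (∑ᶠ y ∈ r ⁻¹' {x}, W y) = 1)
    -- there are no `W`-cycles
    (hnoWcycle : ¬∃ C : Set X, IsWCycle r W C)
    (ν : Measure X) [IsProbabilityMeasure ν]
    (hν_inv : ∀ f : X → ℝ, Continuous f →
      (∫ x, RuelleOp r W f x ∂ν) = ∫ x, f x ∂ν) :
    ∀ x : X, ν {x} = 0 :=
  stmt6_general r hr_cont hr_fin W hW_nonneg hW1 hnoWcycle ν hν_inv
end

section
/- Let X be a compact metric space, r : X → X continuous, surjective, finite-to-one, and W a continuous nonnegative function with R_W 1 = 1. If ν is an extreme point of the set of R_W-invariant Borel probability measures (equivalently, an ergodic invariant measure), and h ∈ C(X) satisfies R_W h = h, then h is constant ν-almost everywhere, equal to ν(h). -/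
/-!
Pairing the invariance of `ν` with the identity `R_W (f · g ∘ r) = g · R_W f` gives
`∫ (h ∘ r - h)² dν = ∫ h² - 2 ∫ h · R_W h + ∫ h² = 0`, so `h ∘ r = h` holds `ν`-a.e.
For a continuous `g` with `g ∘ r = g` a.e., `m = ν(g)` and `c > sup |g|`, the measures with
densities `(c + g) / (c + m)` and `(c - g) / (c - m)` are again `R_W`-invariant probability measures, and `ν`
is their convex combination with weights `(c ± m) / 2c`. Extremality makes the two densities agree
a.e., which forces `g = m` a.e.
-/

open MeasureTheory Filter Topology
open scoped NNReal ENNReal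

/-- The set of `R_W`-invariant Borel probability measures. -/
def MinvSet {X : Type*} [MetricSpace X] [MeasurableSpace X]
    (r : X → X) (W : X → ℝ) : Set (Measure X) :=
  {ν | IsProbabilityMeasure ν ∧ ∀ f : X → ℝ, Continuous f →
    (∫ x, RuelleOp r W f x ∂ν) = ∫ x, f x ∂ν}

theorem Continuous.integrable_of_compactSpace {X : Type*} [TopologicalSpace X] [CompactSpace X]
    [MeasurableSpace X] [OpensMeasurableSpace X] {μ : Measure X} [IsFiniteMeasure μ]
    {E : Type*} [NormedAddCommGroup E] {f : X → E}
    (hf : Continuous f) : Integrable f μ :=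
  hf.integrable_of_hasCompactSupport (.of_compactSpace f)

theorem Continuous.exists_forall_abs_lt_and_abs_integral_lt {X : Type*} [TopologicalSpace X]
    [CompactSpace X] [MeasurableSpace X] {μ : Measure X} [IsProbabilityMeasure μ] {g : X → ℝ}
    (hg : Continuous g) : ∃ c, (∀ x, |g x| < c) ∧ |∫ x, g x ∂μ| < c := by
  obtain ⟨C, hC⟩ := isCompact_univ.exists_bound_of_continuousOn hg.continuousOn
  refine ⟨C + 1, fun x => by linarith [hC x trivial, Real.norm_eq_abs (g x)], ?_⟩
  have := norm_integral_le_of_norm_le_const (μ := μ) (ae_of_all _ fun x => hC x trivial)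
  rw [probReal_univ, mul_one, Real.norm_eq_abs] at this
  linarith

theorem eq_smul_withDensity_add_smul_withDensity {X : Type*} [MeasurableSpace X]
    (μ : Measure X) {φ ψ : X → ℝ} (hφ : Measurable φ) (hψ : Measurable ψ)
    (hφ0 : 0 ≤ φ) (hψ0 : 0 ≤ ψ)
    {a b : ℝ≥0} (hab : ∀ x, a * φ x + b * ψ x = 1) :
    μ = a • μ.withDensity (fun x => ENNReal.ofReal (φ x)) +
      b • μ.withDensity (fun x => ENNReal.ofReal (ψ x)) := by
  have hsum : (a : ℝ≥0∞) • (fun x => ENNReal.ofReal (φ x)) +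
      (b : ℝ≥0∞) • (fun x => ENNReal.ofReal (ψ x)) = 1 := by
    funext x
    simp only [Pi.add_apply, Pi.smul_apply, smul_eq_mul, Pi.one_apply]
    rw [← ENNReal.ofReal_coe_nnreal, ← ENNReal.ofReal_coe_nnreal (p := b),
      ← ENNReal.ofReal_mul a.coe_nonneg, ← ENNReal.ofReal_mul b.coe_nonneg,
      ← ENNReal.ofReal_add (mul_nonneg a.coe_nonneg (hφ0 x)) (mul_nonneg b.coe_nonneg (hψ0 x)),
      hab x, ENNReal.ofReal_one]
  rw [← Measure.coe_nnreal_smul, ← Measure.coe_nnreal_smul, ← withDensity_smul _ hφ.ennreal_ofReal,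
    ← withDensity_smul _ hψ.ennreal_ofReal, ← withDensity_add_left (hφ.ennreal_ofReal.const_smul _),
    hsum, withDensity_one]

theorem ruelleOp_mul_comp {X : Type*} (r : X → X) (W f g : X → ℝ) (x : X) :
    RuelleOp r W (fun y => f y * g (r y)) x = g x * RuelleOp r W f x := by
  rw [RuelleOp, RuelleOp, mul_finsum_mem]
  refine finsum_mem_congr rfl fun y (hy : r y = x) => ?_
  rw [hy]
  ring

theorem ruelleOp_one {X : Type*} {r : X → X} {W : X → ℝ}
    (hW1 : ∀ x, ∑ᶠ y ∈ r ⁻¹' {x}, W y = 1) (x : X) :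
    RuelleOp r W (fun _ => 1) x = 1 := by
  simpa [RuelleOp] using hW1 x

theorem integral_mul_comp_eq_integral_mul_ruelleOp {X : Type*} [MetricSpace X]
    [MeasurableSpace X] {r : X → X} {W : X → ℝ} {ν : Measure X} (hr : Continuous r)
    (hν : ν ∈ MinvSet r W) {f g : X → ℝ} (hf : Continuous f) (hg : Continuous g) :
    ∫ x, f x * g (r x) ∂ν = ∫ x, g x * RuelleOp r W f x ∂ν := by
  rw [← hν.2 (fun y => f y * g (r y)) (by fun_prop)]
  simp only [ruelleOp_mul_comp]

section Invariant

variable {X : Type*} [MetricSpace X] [CompactSpace X] [MeasurableSpace X] [BorelSpace X]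
  {r : X → X} {W : X → ℝ} {ν : Measure X}

theorem ae_comp_eq_of_ruelleOp_eq (hr : Continuous r) (hW1 : ∀ x, ∑ᶠ y ∈ r ⁻¹' {x}, W y = 1)
    (hν : ν ∈ MinvSet r W) {h : X → ℝ} (hh : Continuous h)
    (hh_harm : ∀ x, RuelleOp r W h x = h x) :
    ∀ᵐ x ∂ν, h (r x) = h x := by
  have : IsProbabilityMeasure ν := hν.1
  have hsq : ∫ x, h (r x) ^ 2 ∂ν = ∫ x, h x ^ 2 ∂ν := by
    simpa [ruelleOp_one hW1] using integral_mul_comp_eq_integral_mul_ruelleOp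
      (f := fun _ => 1) (g := fun x => h x ^ 2) hr hν continuous_const (hh.pow 2)
  have hcross : ∫ x, h x * h (r x) ∂ν = ∫ x, h x ^ 2 ∂ν := by
    simpa [hh_harm, sq] using integral_mul_comp_eq_integral_mul_ruelleOp hr hν hh hh
  have hzero : ∫ x, (h (r x) - h x) ^ 2 ∂ν = 0 := calc
    ∫ x, (h (r x) - h x) ^ 2 ∂ν = ∫ x, (h (r x) ^ 2 - 2 * (h x * h (r x)) + h x ^ 2) ∂ν := by
      congr with x; ring
    _ = ∫ x, h (r x) ^ 2 ∂ν - 2 * ∫ x, h x * h (r x) ∂ν + ∫ x, h x ^ 2 ∂ν := by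
      rw [integral_add, integral_sub, integral_const_mul]
      all_goals exact (by fun_prop : Continuous _).integrable_of_compactSpace
    _ = 0 := by rw [hsq, hcross]; ring
  have hint : Integrable (fun x => (h (r x) - h x) ^ 2) ν :=
    (by fun_prop : Continuous _).integrable_of_compactSpace
  rw [integral_eq_zero_iff_of_nonneg (fun x => sq_nonneg _) hint] at hzero
  filter_upwards [hzero] with x hx
  simpa [sub_eq_zero] using hx

theorem withDensity_ofReal_mem_minvSet (hr : Continuous r) (hν : ν ∈ MinvSet r W)
    {φ : X → ℝ} (hφ : Continuous φ) (hφ0 : 0 ≤ φ) (hφ1 : ∫ x, φ x ∂ν = 1)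
    (hφr : ∀ᵐ x ∂ν, φ (r x) = φ x) :
    ν.withDensity (fun x => ENNReal.ofReal (φ x)) ∈ MinvSet r W := by
  have : IsProbabilityMeasure ν := hν.1
  have integral_withDensity (g : X → ℝ) :
      ∫ x, g x ∂ν.withDensity (fun x => ENNReal.ofReal (φ x)) = ∫ x, φ x * g x ∂ν := by
    rw [integral_withDensity_eq_integral_toReal_smul hφ.measurable.ennreal_ofReal
      (ae_of_all _ fun _ => ENNReal.ofReal_lt_top)]
    simp only [ENNReal.toReal_ofReal (hφ0 _), smul_eq_mul]
  refine ⟨⟨?_⟩, fun f hf => ?_⟩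
  · rw [withDensity_apply _ .univ, setLIntegral_univ, ← ofReal_integral_eq_lintegral_ofReal
      hφ.integrable_of_compactSpace (ae_of_all _ hφ0), hφ1, ENNReal.ofReal_one]
  rw [integral_withDensity, integral_withDensity,
    ← integral_mul_comp_eq_integral_mul_ruelleOp hr hν hf hφ]
  refine integral_congr_ae ?_
  filter_upwards [hφr] with x hx
  rw [hx, mul_comm]

theorem ae_eq_of_extreme_of_smul_add_smul_eq_one (hr : Continuous r) (hν : ν ∈ MinvSet r W)
    (hν_extreme : ∀ ν₁ ∈ MinvSet r W, ∀ ν₂ ∈ MinvSet r W, ∀ a b : NNReal,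
      0 < a → 0 < b → a + b = 1 → ν = a • ν₁ + b • ν₂ → ν₁ = ν₂)
    {φ ψ : X → ℝ} (hφ : Continuous φ) (hψ : Continuous ψ) (hφ0 : 0 ≤ φ) (hψ0 : 0 ≤ ψ)
    (hφ1 : ∫ x, φ x ∂ν = 1) (hψ1 : ∫ x, ψ x ∂ν = 1)
    (hφr : ∀ᵐ x ∂ν, φ (r x) = φ x) (hψr : ∀ᵐ x ∂ν, ψ (r x) = ψ x)
    {a b : ℝ≥0} (ha : 0 < a) (hb : 0 < b) (hab : a + b = 1) (hsum : ∀ x, a * φ x + b * ψ x = 1) :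
    φ =ᵐ[ν] ψ := by
  have : IsProbabilityMeasure ν := hν.1
  have hφψ := hν_extreme _ (withDensity_ofReal_mem_minvSet hr hν hφ hφ0 hφ1 hφr)
    _ (withDensity_ofReal_mem_minvSet hr hν hψ hψ0 hψ1 hψr) a b ha hb hab
    (eq_smul_withDensity_add_smul_withDensity ν hφ.measurable hψ.measurable hφ0 hψ0 hsum)
  rw [withDensity_eq_iff_of_sigmaFinite (by fun_prop) (by fun_prop)] at hφψ
  filter_upwards [hφψ] with x hx
  exact (ENNReal.ofReal_eq_ofReal_iff (hφ0 x) (hψ0 x)).mp hx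

theorem ae_eq_integral_of_extreme (hr : Continuous r) (hν : ν ∈ MinvSet r W)
    (hν_extreme : ∀ ν₁ ∈ MinvSet r W, ∀ ν₂ ∈ MinvSet r W, ∀ a b : NNReal,
      0 < a → 0 < b → a + b = 1 → ν = a • ν₁ + b • ν₂ → ν₁ = ν₂)
    {g : X → ℝ} (hg : Continuous g) (hgr : ∀ᵐ x ∂ν, g (r x) = g x) :
    ∀ᵐ x ∂ν, g x = ∫ y, g y ∂ν := by
  have : IsProbabilityMeasure ν := hν.1
  set m := ∫ y, g y ∂ν
  obtain ⟨c, hgc, hmc⟩ := hg.exists_forall_abs_lt_and_abs_integral_lt (μ := ν)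
  have hc : 0 < c := (abs_nonneg m).trans_lt hmc
  have hpos {s : ℝ} (hs : |s| = 1) {y : ℝ} (hy : |y| < c) : 0 < c + s * y := by
    have := neg_abs_le (s * y)
    rw [abs_mul, hs, one_mul] at this
    linarith
  set φ : ℝ → X → ℝ := fun s x => (c + s * g x) / (c + s * m)
  have hφ_nonneg {s : ℝ} (hs : |s| = 1) (x : X) : 0 ≤ φ s x :=
    (div_pos (hpos hs (hgc x)) (hpos hs hmc)).le
  have hφ_integral {s : ℝ} (hs : |s| = 1) : ∫ x, φ s x ∂ν = 1 := by
    rw [integral_div, integral_add (integrable_const c) (hg.integrable_of_compactSpace.const_mul s),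
      integral_const_mul, integral_const, probReal_univ, one_smul]
    exact div_self (hpos hs hmc).ne'
  have hφ_comp (s : ℝ) : ∀ᵐ x ∂ν, φ s (r x) = φ s x := by
    filter_upwards [hgr] with x hx
    simp only [φ, hx]
  have h1 : |(1 : ℝ)| = 1 := abs_one
  have h1' : |(-1 : ℝ)| = 1 := by norm_num
  have hcm_add : 0 < c + m := by simpa using hpos h1 hmc
  have hcm_sub : 0 < c - m := by simpa [← sub_eq_add_neg] using hpos h1' hmc
  have h2c : 0 < 2 * c := by positivity
  obtain ⟨a, ha⟩ : ∃ a : ℝ≥0, (a : ℝ) = (c + m) / (2 * c) := ⟨⟨_, (div_pos hcm_add h2c).le⟩, rfl⟩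
  obtain ⟨b, hb⟩ : ∃ b : ℝ≥0, (b : ℝ) = (c - m) / (2 * c) := ⟨⟨_, (div_pos hcm_sub h2c).le⟩, rfl⟩
  have hφφ := ae_eq_of_extreme_of_smul_add_smul_eq_one hr hν hν_extreme
    (by fun_prop) (by fun_prop) (hφ_nonneg h1) (hφ_nonneg h1') (hφ_integral h1) (hφ_integral h1')
    (hφ_comp 1) (hφ_comp (-1)) (NNReal.coe_pos.mp (ha ▸ div_pos hcm_add h2c))
    (NNReal.coe_pos.mp (hb ▸ div_pos hcm_sub h2c))
    (NNReal.eq (by push_cast [ha, hb]; field_simp; ring))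
    (fun x => by simp only [φ, ha, hb, one_mul, neg_one_mul, ← sub_eq_add_neg]; field_simp; ring)
  filter_upwards [hφφ] with x hx
  simp only [φ, one_mul, neg_one_mul, ← sub_eq_add_neg] at hx
  rw [div_eq_div_iff hcm_add.ne' hcm_sub.ne'] at hx
  have : 2 * c * (g x - m) = 0 := by linear_combination hx
  simpa [hc.ne', sub_eq_zero] using this

end Invariant

theorem stmt9_general
    {X : Type*} [MetricSpace X] [CompactSpace X] [MeasurableSpace X] [BorelSpace X]
    (r : X → X) (hr_cont : Continuous r)
    (W : X → ℝ)
    (hW1 : ∀ x : X, (∑ᶠ y ∈ r ⁻¹' {x}, W y) = 1)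
    -- `ν` is an extreme point of the set of `R_W`-invariant probability measures
    (ν : Measure X) (hν : ν ∈ MinvSet r W)
    (hν_extreme : ∀ ν₁ ∈ MinvSet r W, ∀ ν₂ ∈ MinvSet r W, ∀ a b : NNReal,
      0 < a → 0 < b → a + b = 1 → ν = a • ν₁ + b • ν₂ → ν₁ = ν₂)
    (h : X → ℝ) (hh_cont : Continuous h) (hh_harm : ∀ x, RuelleOp r W h x = h x) :
    ∀ᵐ x ∂ν, h x = ∫ y, h y ∂ν :=
  ae_eq_integral_of_extreme hr_cont hν hν_extreme hh_cont
    (ae_comp_eq_of_ruelleOp_eq hr_cont hW1 hν hh_cont hh_harm)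

theorem stmt9
    {X : Type*} [MetricSpace X] [CompactSpace X] [MeasurableSpace X] [BorelSpace X]
    (r : X → X) (hr_cont : Continuous r) (hr_surj : Function.Surjective r)
    (hr_fin : ∀ x : X, (r ⁻¹' {x}).Finite)
    (W : X → ℝ) (hW_cont : Continuous W) (hW_nonneg : ∀ x, 0 ≤ W x)
    (hW1 : ∀ x : X, (∑ᶠ y ∈ r ⁻¹' {x}, W y) = 1)
    -- `ν` is an extreme point of the set of `R_W`-invariant probability measures
    (ν : Measure X) (hν : ν ∈ MinvSet r W)
    (hν_extreme : ∀ ν₁ ∈ MinvSet r W, ∀ ν₂ ∈ MinvSet r W, ∀ a b : NNReal,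
      0 < a → 0 < b → a + b = 1 → ν = a • ν₁ + b • ν₂ → ν₁ = ν₂)
    (h : X → ℝ) (hh_cont : Continuous h) (hh_harm : ∀ x, RuelleOp r W h x = h x) :
    ∀ᵐ x ∂ν, h x = ∫ y, h y ∂ν :=
  stmt9_general r hr_cont W hW1 ν hν hν_extreme h hh_cont hh_harm
end
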